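/- Let 𝔤_λ be an oscillator Lie algebra and let ξ : 𝔤_λ → ⋀²𝔤_λ be a 1-cocycle with respect to the adjoint action. Then ξ(e₀) = 0. -/

import Mathlib

open Module LinearMap

noncomputable section

/-- Index type for the basis of an oscillator Lie algebra:
`Sum.inl 0 ↦ e₋₁`, `Sum.inl 1 ↦ e₀`, `Sum.inr (Sum.inl i) ↦ eᵢ`,
`Sum.inr (Sum.inr i) ↦ ěᵢ`. -/
abbrev OscIdx (n : ℕ) := Fin 2 ⊕ (Fin n ⊕ Fin n)

/-- The oscillator Lie algebra `𝔤_λ`: a real Lie algebra `L` together with a basis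
`{e₋₁, e₀, e₁, …, eₙ, ě₁, …, ěₙ}` whose nonzero brackets on basis vectors are
`[e₋₁, eⱼ] = λⱼ ěⱼ`, `[e₋₁, ěⱼ] = −λⱼ eⱼ`, `[eⱼ, ěⱼ] = e₀` (all other brackets of the
basis vectors vanish or follow by antisymmetry; in particular `e₀` is central). -/
structure OscAlg (n : ℕ) (lam : Fin n → ℝ) (L : Type) [LieRing L] [LieAlgebra ℝ L] where
  basis : Basis (OscIdx n) ℝ L
  bracket_em_e : ∀ j, ⁅basis (Sum.inl 0), basis (Sum.inr (Sum.inl j))⁆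
      = lam j • basis (Sum.inr (Sum.inr j))
  bracket_em_f : ∀ j, ⁅basis (Sum.inl 0), basis (Sum.inr (Sum.inr j))⁆
      = -lam j • basis (Sum.inr (Sum.inl j))
  bracket_e_f : ∀ i j, ⁅basis (Sum.inr (Sum.inl i)), basis (Sum.inr (Sum.inr j))⁆
      = if i = j then basis (Sum.inl 1) else 0
  bracket_e_e : ∀ i j, ⁅basis (Sum.inr (Sum.inl i)), basis (Sum.inr (Sum.inl j))⁆ = 0
  bracket_f_f : ∀ i j, ⁅basis (Sum.inr (Sum.inr i)), basis (Sum.inr (Sum.inr j))⁆ = 0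
  bracket_e0 : ∀ x : L, ⁅basis (Sum.inl 1), x⁆ = 0

/-- `0 < λ₁ ≤ … ≤ λₙ`: the standing assumption on the parameters of an oscillator
Lie algebra. -/
def OscParam {n : ℕ} (lam : Fin n → ℝ) : Prop := (∀ i, 0 < lam i) ∧ Monotone lam

/-- Genericity: `0 < λ₁ < … < λₙ` and `λ_k ≠ λ_i + λ_j` for all `i < j < k`. -/
def IsGeneric {n : ℕ} (lam : Fin n → ℝ) : Prop :=
  (∀ i, 0 < lam i) ∧ StrictMono lam ∧
    ∀ i j k : Fin n, i < j → j < k → lam k ≠ lam i + lam j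

namespace OscAlg

variable {n : ℕ} {lam : Fin n → ℝ} {L : Type} [LieRing L] [LieAlgebra ℝ L]

/-- `e₋₁`. -/
def em (B : OscAlg n lam L) : L := B.basis (Sum.inl 0)
/-- `e₀`. -/
def e0 (B : OscAlg n lam L) : L := B.basis (Sum.inl 1)
/-- `eᵢ`. -/
def e (B : OscAlg n lam L) (i : Fin n) : L := B.basis (Sum.inr (Sum.inl i))
/-- `ěᵢ`. -/
def f (B : OscAlg n lam L) (i : Fin n) : L := B.basis (Sum.inr (Sum.inr i))
/-- `e₋₁*`, an element of the dual basis. -/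
def em' (B : OscAlg n lam L) : Dual ℝ L := B.basis.coord (Sum.inl 0)
/-- `e₀*`. -/
def e0' (B : OscAlg n lam L) : Dual ℝ L := B.basis.coord (Sum.inl 1)
/-- `eᵢ*`. -/
def e' (B : OscAlg n lam L) (i : Fin n) : Dual ℝ L := B.basis.coord (Sum.inr (Sum.inl i))
/-- `ěᵢ*`. -/
def f' (B : OscAlg n lam L) (i : Fin n) : Dual ℝ L := B.basis.coord (Sum.inr (Sum.inr i))

/-- The subspace `S` spanned by the `eᵢ, ěᵢ`. -/
def S (B : OscAlg n lam L) : Submodule ℝ L :=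
  Submodule.span ℝ (Set.range B.e ∪ Set.range B.f)

/-- The `2`-form `ω` on `𝔤_λ`, viewed as a linear map `𝔤_λ → 𝔤_λ*`:
`ω(e₋₁,·) = ω(e₀,·) = 0`, `ω(eᵢ,eⱼ) = ω(ěᵢ,ěⱼ) = 0`, `ω(eᵢ,ěⱼ) = δᵢⱼ`. -/
def om (B : OscAlg n lam L) : L →ₗ[ℝ] Dual ℝ L :=
  ∑ i : Fin n, ((B.e' i).smulRight (B.f' i) - (B.f' i).smulRight (B.e' i))

/-- The derivation `J_a` of `𝔤_λ` given by `J_a(e₋₁) = J_a(e₀) = 0`, `J_a(eᵢ) = aᵢ ěᵢ`,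
`J_a(ěᵢ) = −aᵢ eᵢ`. -/
def Ja (B : OscAlg n lam L) (a : Fin n → ℝ) : L →ₗ[ℝ] L :=
  B.basis.constr ℝ (Sum.elim (fun _ => (0 : L))
    (Sum.elim (fun i => a i • B.f i) (fun i => -(a i) • B.e i)))

end OscAlg

section Bivectors

variable {L : Type} [LieRing L] [LieAlgebra ℝ L]

/-- `x ∧ y`, viewed as the linear map `𝔤* → 𝔤`, `α ↦ α(x) y − α(y) x`; this corresponds
to the skew-symmetric bilinear form `(α,β) ↦ α(x)β(y) − α(y)β(x)` on `𝔤*`. -/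
def wedge (x y : L) : Dual ℝ L →ₗ[ℝ] L :=
  (Module.Dual.eval ℝ L x).smulRight y - (Module.Dual.eval ℝ L y).smulRight x

/-- A bivector `r ∈ ⋀²𝔤`, identified with the linear map `r_# : 𝔤* → 𝔤` of the
corresponding skew-symmetric bilinear form on `𝔤*` (so `r(α,β) = β(r_#(α))`). -/
def IsBivector (r : Dual ℝ L →ₗ[ℝ] L) : Prop := ∀ α β : Dual ℝ L, α (r β) = - β (r α)

/-- The coadjoint action `ad*_u α := α ∘ ad_u`. -/
def coad (u : L) : Dual ℝ L →ₗ[ℝ] Dual ℝ L := (LieAlgebra.ad ℝ L u).dualMap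

/-- `J† r` for an endomorphism `J` of `𝔤`; in terms of bilinear forms,
`(J† r)(α,β) = r(α∘J, β) + r(α, β∘J)`. -/
def dag (J : L →ₗ[ℝ] L) (r : Dual ℝ L →ₗ[ℝ] L) : Dual ℝ L →ₗ[ℝ] L :=
  r ∘ₗ J.dualMap + J ∘ₗ r

/-- The adjoint action `ad_u† r` of `u ∈ 𝔤` on bivectors:
`(ad_u† r)(α,β) = r(ad*_u α, β) + r(α, ad*_u β)`. -/
def adDag (u : L) (r : Dual ℝ L →ₗ[ℝ] L) : Dual ℝ L →ₗ[ℝ] L :=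
  dag (LieAlgebra.ad ℝ L u) r

/-- The Schouten bracket `[r,r]` of a bivector with itself:
`[r,r](α,β,γ) = 2α([r_#β, r_#γ]) + 2β([r_#γ, r_#α]) + 2γ([r_#α, r_#β])`. -/
def schouten (r : Dual ℝ L →ₗ[ℝ] L) (α β γ : Dual ℝ L) : ℝ :=
  2 * α ⁅r β, r γ⁆ + 2 * β ⁅r γ, r α⁆ + 2 * γ ⁅r α, r β⁆

/-- `r` is a solution of the classical Yang–Baxter equation: `[r,r] = 0`. -/
def IsCYBE (r : Dual ℝ L →ₗ[ℝ] L) : Prop := ∀ α β γ : Dual ℝ L, schouten r α β γ = 0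

/-- `r` is a solution of the generalized classical Yang–Baxter equation:
`ad_u [r,r] = 0` for all `u`. -/
def IsGCYBE (r : Dual ℝ L →ₗ[ℝ] L) : Prop :=
  ∀ (u : L) (α β γ : Dual ℝ L),
    schouten r (coad u α) β γ + schouten r α (coad u β) γ + schouten r α β (coad u γ) = 0

/-- A derivation of the Lie algebra `L`. -/
def IsDerivation (J : L →ₗ[ℝ] L) : Prop := ∀ x y : L, J ⁅x, y⁆ = ⁅J x, y⁆ + ⁅x, J y⁆

/-- The 1-cocycle condition for `ξ : 𝔤 → ⋀²𝔤` with respect to the adjoint action: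
`ξ([u,v]) = ad_u† ξ(v) − ad_v† ξ(u)`. -/
def IsCocycle (ξ : L →ₗ[ℝ] (Dual ℝ L →ₗ[ℝ] L)) : Prop :=
  ∀ u v : L, ξ ⁅u, v⁆ = adDag u (ξ v) - adDag v (ξ u)

/-- The dual bracket `[α,β]*` associated to `ξ : 𝔤 → ⋀²𝔤`:
`[α,β]*(u) = ξ(u)(α,β)`. -/
def dualBr (ξ : L →ₗ[ℝ] (Dual ℝ L →ₗ[ℝ] L)) (α β : Dual ℝ L) : Dual ℝ L :=
  (β : L →ₗ[ℝ] ℝ) ∘ₗ (ξ.flip α)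

/-- `ξ : 𝔤 → ⋀²𝔤` is a Lie bialgebra structure: `ξ` takes values in bivectors, is a
1-cocycle, and the dual bracket satisfies the Jacobi identity. -/
def IsBialgebra (ξ : L →ₗ[ℝ] (Dual ℝ L →ₗ[ℝ] L)) : Prop :=
  (∀ (u : L) (α β : Dual ℝ L), α (ξ u β) = - β (ξ u α)) ∧ IsCocycle ξ ∧
  ∀ α β γ : Dual ℝ L,
    dualBr ξ (dualBr ξ α β) γ + dualBr ξ (dualBr ξ β γ) α + dualBr ξ (dualBr ξ γ α) β = 0

end Bivectors

namespace OscAlg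

variable {n : ℕ} {lam : Fin n → ℝ} {L : Type} [LieRing L] [LieAlgebra ℝ L]

/-- Membership in `⋀²S`: a bivector `r` with `r_#(e₋₁*) = r_#(e₀*) = 0` and
`Im r_# ⊆ S`. -/
def InW2S (B : OscAlg n lam L) (r : Dual ℝ L →ₗ[ℝ] L) : Prop :=
  IsBivector r ∧ r B.em' = 0 ∧ r B.e0' = 0 ∧ ∀ α : Dual ℝ L, r α ∈ B.S

/-- `ω_{r₁,r₂}(α,β) = (1/2)(ω(r₁_#(α), r₂_#(β)) + ω(r₂_#(α), r₁_#(β)))`. -/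
def omPair (B : OscAlg n lam L) (r₁ r₂ : Dual ℝ L →ₗ[ℝ] L) (α β : Dual ℝ L) : ℝ :=
  (1/2) * (B.om (r₁ α) (r₂ β) + B.om (r₂ α) (r₁ β))

end OscAlg

/-!
Since `e₀` is central, the cocycle identity for the pair `(u, e₀)` says that `r = ξ(e₀)` is
`ad`-invariant: `r(α ∘ ad_u) = -[u, r(α)]`. Taking `α = e₀*` and `u = e₋₁, eⱼ, ěⱼ` shows that
`z = r(e₀*)` commutes with `e₋₁`, hence has no `eⱼ`, `ěⱼ` components (as `λⱼ ≠ 0`), and that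
`r(eⱼ*) = [ěⱼ, z]`, `r(ěⱼ*) = -[eⱼ, z]`. Skew-symmetry kills the `e₀` component of `z` and, through
`0 = eⱼ*(r(eⱼ*)) = λⱼ e₋₁*(z)`, its `e₋₁` component. So `z = 0` and `r` vanishes on every dual
basis vector except `e₋₁*`; a skew form with that property is zero.
-/

section Bivectors

variable {L : Type} [LieRing L] [LieAlgebra ℝ L]

theorem IsBivector.apply_self {r : Dual ℝ L →ₗ[ℝ] L} (hr : IsBivector r) (α : Dual ℝ L) :
    α (r α) = 0 := by
  linarith [hr α α]

theorem IsBivector.eq_zero_of_forall_ne {ι : Type*} [Finite ι] {r : Dual ℝ L →ₗ[ℝ] L}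
    (hr : IsBivector r) (b : Basis ι ℝ L) (i₀ : ι) (h : ∀ i ≠ i₀, r (b.coord i) = 0) :
    r = 0 := by
  classical
  have h₀ : r (b.coord i₀) = 0 := b.ext_elem fun i => by
    rw [← b.coord_apply, map_zero, Finsupp.zero_apply]
    rcases eq_or_ne i i₀ with rfl | hi
    · exact hr.apply_self _
    · rw [hr, h i hi, map_zero, neg_zero]
  refine b.dualBasis.ext fun i => ?_
  rw [Basis.coe_dualBasis, LinearMap.zero_apply]
  rcases eq_or_ne i i₀ with rfl | hi
  exacts [h₀, h i hi]

theorem IsCocycle.adDag_eq_zero_of_central {ξ : L →ₗ[ℝ] (Dual ℝ L →ₗ[ℝ] L)} (hξ : IsCocycle ξ)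
    {z : L} (hz : ∀ x : L, ⁅z, x⁆ = 0) (u : L) : adDag u (ξ z) = 0 := by
  have had : LieAlgebra.ad ℝ L z = 0 := LinearMap.ext hz
  have hzu : adDag z (ξ u) = 0 := by
    ext α
    simp [adDag, dag, had, LinearMap.dualMap_apply']
  have h := hξ u z
  rwa [← lie_skew, hz, neg_zero, map_zero, hzu, sub_zero, eq_comm] at h

theorem apply_comp_ad_of_adDag_eq_zero {r : Dual ℝ L →ₗ[ℝ] L} {u : L} (h : adDag u r = 0)
    (α : Dual ℝ L) : r (α ∘ₗ LieAlgebra.ad ℝ L u) = -⁅u, r α⁆ :=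
  eq_neg_of_add_eq_zero_left (LinearMap.congr_fun h α)

end Bivectors

namespace OscAlg

variable {n : ℕ} {lam : Fin n → ℝ} {L : Type} [LieRing L] [LieAlgebra ℝ L] (B : OscAlg n lam L)

theorem lie_e0_right (x : L) : ⁅x, B.basis (Sum.inl 1)⁆ = 0 := by
  rw [← lie_skew, B.bracket_e0, neg_zero]

theorem lie_e_em (j : Fin n) : ⁅B.basis (Sum.inr (Sum.inl j)), B.basis (Sum.inl 0)⁆
    = -lam j • B.basis (Sum.inr (Sum.inr j)) := by
  rw [← lie_skew, B.bracket_em_e, neg_smul]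

theorem lie_f_em (j : Fin n) : ⁅B.basis (Sum.inr (Sum.inr j)), B.basis (Sum.inl 0)⁆
    = lam j • B.basis (Sum.inr (Sum.inl j)) := by
  rw [← lie_skew, B.bracket_em_f, neg_smul, neg_neg]

theorem lie_f_e (i j : Fin n) : ⁅B.basis (Sum.inr (Sum.inr i)), B.basis (Sum.inr (Sum.inl j))⁆
    = if j = i then -B.basis (Sum.inl 1) else 0 := by
  rw [← lie_skew, B.bracket_e_f, apply_ite Neg.neg, neg_zero]

section CoadjointAction

attribute [local simp] bracket_em_e bracket_em_f bracket_e_f bracket_e_e bracket_f_f bracket_e0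
  lie_e0_right lie_e_em lie_f_em lie_f_e Basis.coord_apply Finsupp.single_apply

theorem e0'_comp_ad_em : B.e0' ∘ₗ LieAlgebra.ad ℝ L B.em = 0 :=
  B.basis.ext fun k => by
    rcases k with k | k | k <;> [fin_cases k; skip; skip] <;> simp [em, e0']

theorem e0'_comp_ad_e (j : Fin n) : B.e0' ∘ₗ LieAlgebra.ad ℝ L (B.e j) = B.f' j :=
  B.basis.ext fun k => by
    rcases k with k | k | k <;> [fin_cases k; skip; skip] <;> simp [e, e0', f']
    split_ifs <;> simp_all

theorem e0'_comp_ad_f (j : Fin n) : B.e0' ∘ₗ LieAlgebra.ad ℝ L (B.f j) = -B.e' j :=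
  B.basis.ext fun k => by
    rcases k with k | k | k <;> [fin_cases k; skip; skip] <;> simp [f, e0', e']
    split_ifs <;> simp_all

theorem e'_comp_ad_em (j : Fin n) : B.e' j ∘ₗ LieAlgebra.ad ℝ L B.em = -lam j • B.f' j :=
  B.basis.ext fun k => by
    rcases k with k | k | k <;> [fin_cases k; skip; skip] <;> simp [em, e', f']
    split_ifs <;> simp_all

theorem f'_comp_ad_em (j : Fin n) : B.f' j ∘ₗ LieAlgebra.ad ℝ L B.em = lam j • B.e' j :=
  B.basis.ext fun k => by
    rcases k with k | k | k <;> [fin_cases k; skip; skip] <;> simp [em, e', f']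
    split_ifs <;> simp_all

theorem e'_comp_ad_f (j : Fin n) : B.e' j ∘ₗ LieAlgebra.ad ℝ L (B.f j) = lam j • B.em' :=
  B.basis.ext fun k => by
    rcases k with k | k | k <;> [fin_cases k; skip; skip] <;> simp [f, e', em']
    split_ifs <;> simp_all

end CoadjointAction

theorem eq_zero_of_coords {x : L} (hm : B.em' x = 0) (h0 : B.e0' x = 0)
    (he : ∀ j, B.e' j x = 0) (hf : ∀ j, B.f' j x = 0) : x = 0 :=
  B.basis.forall_coord_eq_zero_iff.mp fun k => by
    rcases k with k | k | k
    · fin_cases k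
      exacts [hm, h0]
    exacts [he k, hf k]

theorem apply_e0'_eq_zero_of_invariant (hn : 0 < n) (hlam : ∀ i, lam i ≠ 0)
    {r : Dual ℝ L →ₗ[ℝ] L} (hr : IsBivector r) (hinv : ∀ u, adDag u r = 0) : r B.e0' = 0 := by
  set z := r B.e0'
  have hcomm : ⁅B.em, z⁆ = 0 := by
    have h := apply_comp_ad_of_adDag_eq_zero (hinv B.em) B.e0'
    rwa [B.e0'_comp_ad_em, map_zero, eq_comm, neg_eq_zero] at h
  have coord_eq_zero (α : Dual ℝ L) (c : ℝ) (β : Dual ℝ L) (hc : c ≠ 0)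
      (h : α ∘ₗ LieAlgebra.ad ℝ L B.em = c • β) : β z = 0 := by
    simpa [hcomm, hc] using (LinearMap.congr_fun h z).symm
  refine B.eq_zero_of_coords ?_ (hr.apply_self _) (fun j => ?_) (fun j => ?_)
  · obtain ⟨j⟩ : Nonempty (Fin n) := ⟨⟨0, hn⟩⟩
    have hrj : r (B.e' j) = ⁅B.f j, z⁆ := by
      have h := apply_comp_ad_of_adDag_eq_zero (hinv (B.f j)) B.e0'
      rwa [B.e0'_comp_ad_f, map_neg, neg_inj] at h
    have h := LinearMap.congr_fun (B.e'_comp_ad_f j) z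
    simp only [LinearMap.comp_apply, LieAlgebra.ad_apply, ← hrj, hr.apply_self,
      LinearMap.smul_apply, smul_eq_mul] at h
    simpa [hlam j] using h.symm
  · exact coord_eq_zero _ _ _ (hlam j) (B.f'_comp_ad_em j)
  · exact coord_eq_zero _ _ _ (neg_ne_zero.mpr (hlam j)) (B.e'_comp_ad_em j)

theorem invariant_bivector_eq_zero (B : OscAlg n lam L) (hn : 0 < n) (hlam : ∀ i, lam i ≠ 0)
    {r : Dual ℝ L →ₗ[ℝ] L} (hr : IsBivector r) (hinv : ∀ u, adDag u r = 0) : r = 0 := by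
  have hz := B.apply_e0'_eq_zero_of_invariant hn hlam hr hinv
  refine hr.eq_zero_of_forall_ne B.basis (Sum.inl 0) fun i hi => ?_
  rcases i with k | j | j
  · fin_cases k
    exacts [absurd rfl hi, hz]
  · have h := apply_comp_ad_of_adDag_eq_zero (hinv (B.f j)) B.e0'
    rwa [B.e0'_comp_ad_f, hz, lie_zero, neg_zero, map_neg, neg_eq_zero] at h
  · have h := apply_comp_ad_of_adDag_eq_zero (hinv (B.e j)) B.e0'
    rwa [B.e0'_comp_ad_e, hz, lie_zero, neg_zero] at h

end OscAlg

/-- **Proposition.** For any 1-cocycle `ξ : 𝔤_λ → ⋀²𝔤_λ` with respect to the adjoint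
action on an oscillator Lie algebra, `ξ(e₀) = 0`. -/
theorem oscillator_cocycle_vanishes_on_e0
    {n : ℕ} (hn : 0 < n) {lam : Fin n → ℝ} (hlam : OscParam lam)
    {L : Type} [LieRing L] [LieAlgebra ℝ L] (B : OscAlg n lam L)
    (ξ : L →ₗ[ℝ] (Dual ℝ L →ₗ[ℝ] L))
    (hskew : ∀ (u : L) (α β : Dual ℝ L), α (ξ u β) = - β (ξ u α))
    (hcoc : IsCocycle ξ) :
    ξ B.e0 = 0 :=
  B.invariant_bivector_eq_zero hn (fun i => (hlam.1 i).ne') (hskew B.e0)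
    (hcoc.adDag_eq_zero_of_central B.bracket_e0)
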